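/- The function k(λ,μ) = −|(λ−μ)/(1−conj(μ)λ)|² + |λ|² + |μ|² is a kernel (positive semi-definite and self-adjoint) on 𝔻 × 𝔻. -/

import Mathlib

/-! The identity `1 - d(λ, μ)² = (1 - |λ|²)(1 - |μ|²) / |1 - μ̄λ|²` rewrites the kernel as
`|λ|² |μ|² + (1 - |λ|²)(1 - |μ|²) (1 / |1 - μ̄λ|² - 1)`. The first term is of rank one. Multiplying
the geometric series of `1 / (1 - λμ̄)` and `1 / (1 - λ̄μ)` gives
`1 / |1 - μ̄λ|² - 1 = ∑_{(a,b) ≠ (0,0)} φ_{ab}(λ) conj φ_{ab}(μ)` with `φ_{ab}(z) = z^a z̄^b`,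
a convergent sum of rank-one positive kernels. -/

open scoped ComplexOrder ComplexConjugate

/-- The squared pseudo-hyperbolic distance on the open unit disk. -/
noncomputable def pseudoHypDistSq (l m : ℂ) : ℝ :=
  ‖(l - m) / (1 - conj m * l)‖ ^ 2

def IsPosSemidefKernelOn {α : Type*} (K : α → α → ℂ) (s : Set α) : Prop :=
  ∀ (n : ℕ) (x : Fin n → α), (∀ i, x i ∈ s) → ∀ c : Fin n → ℂ,
    0 ≤ ∑ i, ∑ j, c i * conj (c j) * K (x i) (x j)

section PosSemidefKernel

variable {α : Type*} {K L : α → α → ℂ} {s : Set α}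

theorem isPosSemidefKernelOn_mul_conj (f : α → ℂ) (s : Set α) :
    IsPosSemidefKernelOn (fun x y => f x * conj (f y)) s := by
  intro n x _ c
  have hsq : ∑ i, ∑ j, c i * conj (c j) * (f (x i) * conj (f (x j)))
      = (∑ i, c i * f (x i)) * star (∑ i, c i * f (x i)) := by
    rw [star_sum, Finset.sum_mul_sum]
    simp only [Complex.star_def, map_mul]
    exact Finset.sum_congr rfl fun i _ => Finset.sum_congr rfl fun j _ => by ring
  rw [hsq]
  exact mul_star_self_nonneg _

namespace IsPosSemidefKernelOn

theorem add (hK : IsPosSemidefKernelOn K s) (hL : IsPosSemidefKernelOn L s) :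
    IsPosSemidefKernelOn (fun x y => K x y + L x y) s := by
  intro n x hx c
  simpa only [mul_add, Finset.sum_add_distrib] using add_nonneg (hK n x hx c) (hL n x hx c)

theorem mul_conj_left (hK : IsPosSemidefKernelOn K s) (f : α → ℂ) :
    IsPosSemidefKernelOn (fun x y => f x * conj (f y) * K x y) s := by
  intro n x hx c
  convert hK n x hx (fun i => c i * f (x i)) using 3 with i _ j _
  simp only [map_mul]
  ring

theorem congr (hK : IsPosSemidefKernelOn K s) (h : ∀ x ∈ s, ∀ y ∈ s, K x y = L x y) :
    IsPosSemidefKernelOn L s := by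
  intro n x hx c
  simpa only [h _ (hx _) _ (hx _)] using hK n x hx c

theorem of_hasSum {ι : Type*} {f : ι → α → ℂ}
    (hK : ∀ x ∈ s, ∀ y ∈ s, HasSum (fun p => f p x * conj (f p y)) (K x y)) :
    IsPosSemidefKernelOn K s := by
  intro n x hx c
  have hsum := hasSum_sum fun i (_ : i ∈ Finset.univ) =>
    hasSum_sum fun j (_ : j ∈ Finset.univ) => (hK _ (hx i) _ (hx j)).mul_left (c i * conj (c j))
  exact hsum.nonneg fun p => isPosSemidefKernelOn_mul_conj (f p) s n x hx c

end IsPosSemidefKernelOn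

end PosSemidefKernel

theorem hasSum_pow_mul_pow {R : Type*} [NormedField R] [CompleteSpace R] {z w : R}
    (hz : ‖z‖ < 1) (hw : ‖w‖ < 1) :
    HasSum (fun p : ℕ × ℕ => z ^ p.1 * w ^ p.2) ((1 - z)⁻¹ * (1 - w)⁻¹) :=
  (hasSum_geometric_of_norm_lt_one hz).mul (hasSum_geometric_of_norm_lt_one hw) <|
    summable_mul_of_summable_norm (by simpa using summable_geometric_of_lt_one (norm_nonneg _) hz)
      (by simpa using summable_geometric_of_lt_one (norm_nonneg _) hw)

theorem pseudoHypDistSq_comm (l m : ℂ) : pseudoHypDistSq l m = pseudoHypDistSq m l := by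
  have hden : ‖1 - conj l * m‖ = ‖1 - conj m * l‖ := by
    rw [← Complex.norm_conj (1 - conj l * m)]
    simp only [map_sub, map_one, map_mul, Complex.conj_conj, mul_comm]
  rw [pseudoHypDistSq, pseudoHypDistSq, norm_div, norm_div, norm_sub_rev, hden]

theorem norm_one_sub_conj_mul_sq_sub_norm_sub_sq (l m : ℂ) :
    ‖1 - conj m * l‖ ^ 2 - ‖l - m‖ ^ 2 = (1 - ‖l‖ ^ 2) * (1 - ‖m‖ ^ 2) := by
  simp only [Complex.sq_norm, Complex.normSq_apply, Complex.sub_re, Complex.sub_im,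
    Complex.mul_re, Complex.mul_im, Complex.conj_re, Complex.conj_im, Complex.one_re,
    Complex.one_im]
  ring

theorem one_sub_pseudoHypDistSq {l m : ℂ} (h : 1 - conj m * l ≠ 0) :
    1 - pseudoHypDistSq l m = (1 - ‖l‖ ^ 2) * (1 - ‖m‖ ^ 2) / ‖1 - conj m * l‖ ^ 2 := by
  rw [← norm_one_sub_conj_mul_sq_sub_norm_sub_sq, pseudoHypDistSq, norm_div, div_pow,
    eq_div_iff (by positivity), sub_mul, div_mul_cancel₀ _ (by positivity), one_mul]

theorem norm_conj_mul_lt_one {l m : ℂ} (hl : ‖l‖ < 1) (hm : ‖m‖ < 1) : ‖conj m * l‖ < 1 := by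
  rw [norm_mul, Complex.norm_conj]
  exact mul_lt_one_of_nonneg_of_lt_one_left (norm_nonneg _) hm hl.le

theorem one_sub_conj_mul_ne_zero {l m : ℂ} (hl : ‖l‖ < 1) (hm : ‖m‖ < 1) : 1 - conj m * l ≠ 0 :=
  sub_ne_zero.2 fun h => (norm_conj_mul_lt_one hl hm).ne (by rw [← h, norm_one])

noncomputable def nonconstMonomial (p : ℕ × ℕ) (z : ℂ) : ℂ :=
  if p = 0 then 0 else z ^ p.1 * conj z ^ p.2

theorem hasSum_nonconstMonomial_mul_conj {l m : ℂ} (hl : ‖l‖ < 1) (hm : ‖m‖ < 1) :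
    HasSum (fun p => nonconstMonomial p l * conj (nonconstMonomial p m))
      (((‖1 - conj m * l‖ ^ 2)⁻¹ - 1 : ℝ) : ℂ) := by
  have hz := norm_conj_mul_lt_one hl hm
  have hz' : ‖conj (conj m * l)‖ < 1 := by rwa [Complex.norm_conj]
  have hgeom := hasSum_pow_mul_pow hz hz'
  have hsum : (1 - conj m * l)⁻¹ * (1 - conj (conj m * l))⁻¹ = ((‖1 - conj m * l‖ ^ 2)⁻¹ : ℝ) := by
    rw [← map_one (starRingEnd ℂ), ← map_sub, map_one, ← mul_inv, Complex.mul_conj,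
      Complex.sq_norm, Complex.ofReal_inv]
  have hnonconst := hasSum_ite_sub_hasSum hgeom 0
  rw [hsum, Prod.fst_zero, Prod.snd_zero, pow_zero, pow_zero, mul_one] at hnonconst
  push_cast at hnonconst ⊢
  refine hnonconst.congr_fun fun p => ?_
  unfold nonconstMonomial
  split_ifs
  · simp
  · simp only [map_mul, map_pow, Complex.conj_conj]
    ring

theorem neg_pseudoHypDistSq_add_sq_eq {l m : ℂ} (h : 1 - conj m * l ≠ 0) :
    -pseudoHypDistSq l m + ‖l‖ ^ 2 + ‖m‖ ^ 2
      = ‖l‖ ^ 2 * ‖m‖ ^ 2 + (1 - ‖l‖ ^ 2) * (1 - ‖m‖ ^ 2) * ((‖1 - conj m * l‖ ^ 2)⁻¹ - 1) := by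
  linear_combination one_sub_pseudoHypDistSq h

theorem isPosSemidefKernelOn_neg_pseudoHypDistSq_add_sq :
    IsPosSemidefKernelOn (fun l m => ((-pseudoHypDistSq l m + ‖l‖ ^ 2 + ‖m‖ ^ 2 : ℝ) : ℂ))
      (Metric.ball (0 : ℂ) 1) := by
  have hnorm : IsPosSemidefKernelOn (fun l m => ((‖l‖ ^ 2 : ℝ) : ℂ) * conj ((‖m‖ ^ 2 : ℝ) : ℂ))
      (Metric.ball (0 : ℂ) 1) := isPosSemidefKernelOn_mul_conj _ _
  have hsqSzego : IsPosSemidefKernelOn (fun l m => (((‖1 - conj m * l‖ ^ 2)⁻¹ - 1 : ℝ) : ℂ))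
      (Metric.ball (0 : ℂ) 1) := .of_hasSum fun l hl m hm =>
    hasSum_nonconstMonomial_mul_conj (mem_ball_zero_iff.1 hl) (mem_ball_zero_iff.1 hm)
  refine (hnorm.add (hsqSzego.mul_conj_left fun l => ((1 - ‖l‖ ^ 2 : ℝ) : ℂ))).congr
    fun l hl m hm => ?_
  rw [neg_pseudoHypDistSq_add_sq_eq
    (one_sub_conj_mul_ne_zero (mem_ball_zero_iff.1 hl) (mem_ball_zero_iff.1 hm))]
  simp only [Complex.conj_ofReal]
  push_cast
  ring

/-- `k(λ,μ) = −d(λ,μ)² + |λ|² + |μ|²` is a kernel (self-adjoint and positive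
semi-definite) on the open unit disk `𝔻`. -/
theorem neg_pseudoHypDistSq_add_sq_isKernel :
    (∀ l m : ℂ, ‖l‖ < 1 → ‖m‖ < 1 →
      ((-pseudoHypDistSq m l + ‖m‖ ^ 2 + ‖l‖ ^ 2 : ℝ) : ℂ) =
        conj ((-pseudoHypDistSq l m + ‖l‖ ^ 2 + ‖m‖ ^ 2 : ℝ) : ℂ)) ∧
    ∀ (n : ℕ) (l : Fin n → ℂ), (∀ i, ‖l i‖ < 1) →
      ∀ c : Fin n → ℂ,
        0 ≤ ∑ i, ∑ j, c i * conj (c j) *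
          ((-pseudoHypDistSq (l i) (l j)
            + ‖l i‖ ^ 2 + ‖l j‖ ^ 2 : ℝ) : ℂ) := by
  refine ⟨fun l m _ _ => ?_, fun n l hl c => ?_⟩
  · rw [Complex.conj_ofReal, pseudoHypDistSq_comm m l, add_right_comm]
  · exact isPosSemidefKernelOn_neg_pseudoHypDistSq_add_sq n l
      (fun i => mem_ball_zero_iff.2 (hl i)) c
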